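/- Let α₁, α₂, β₁, β₂ ∈ ℂ and set ã₁ = (−α₁, 1)ᵀ, ã₂ = (α₂, −1)ᵀ, b̃₁ = (−β₁, 1)ᵀ, b̃₂ = (β₂, −1)ᵀ. Then (𝒮 ∘ M)(θ(ã₁ b̃₁ᵀ, ã₂ b̃₂ᵀ)) = (α₁α₂, −(α₁+α₂), 1)ᵀ · (β₁β₂, −(β₁+β₂), 1), a rank-at-most-one 3×3 matrix. -/
import Mathlib


open Matrix

/-- The bilinear map `θ : ℂ^{2×2} × ℂ^{2×2} → ℂ¹⁰`, with `U = [[u₁,u₃],[u₂,u₄]]`,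
`V = [[v₁,v₃],[v₂,v₄]]`. -/
noncomputable def thetaMap (U V : Matrix (Fin 2) (Fin 2) ℂ) : Fin 10 → ℂ :=
  ![U 0 0 * V 0 0, U 1 0 * V 1 0, U 0 1 * V 0 1, U 1 1 * V 1 1,
    U 0 0 * V 1 0 + U 1 0 * V 0 0, U 0 0 * V 0 1 + U 0 1 * V 0 0,
    U 0 0 * V 1 1 + U 1 1 * V 0 0, U 1 0 * V 0 1 + U 0 1 * V 1 0,
    U 1 0 * V 1 1 + U 1 1 * V 1 0, U 0 1 * V 1 1 + U 1 1 * V 0 1]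

/-- The composition `𝒮 ∘ M : ℂ¹⁰ → ℂ^{3×3}`, given explicitly by
`(𝒮 ∘ M)(ϑ) = [[ϑ₁, ϑ₆, ϑ₃],[ϑ₅, ϑ₇+ϑ₈, ϑ₁₀],[ϑ₂, ϑ₉, ϑ₄]]`. -/
noncomputable def SM (ϑ : Fin 10 → ℂ) : Matrix (Fin 3) (Fin 3) ℂ :=
  !![ϑ 0, ϑ 5,       ϑ 2;
     ϑ 4, ϑ 6 + ϑ 7, ϑ 9;
     ϑ 1, ϑ 8,       ϑ 3]


section Aux
variable {α : Type*} (a0 a1 a2 a3 a4 a5 a6 a7 a8 a9 : α)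
lemma vec10_five : (![a0,a1,a2,a3,a4,a5,a6,a7,a8,a9] : Fin 10 → α) 5 = a5 := rfl
lemma vec10_six : (![a0,a1,a2,a3,a4,a5,a6,a7,a8,a9] : Fin 10 → α) 6 = a6 := rfl
lemma vec10_seven : (![a0,a1,a2,a3,a4,a5,a6,a7,a8,a9] : Fin 10 → α) 7 = a7 := rfl
lemma vec10_eight : (![a0,a1,a2,a3,a4,a5,a6,a7,a8,a9] : Fin 10 → α) 8 = a8 := rfl
lemma vec10_nine : (![a0,a1,a2,a3,a4,a5,a6,a7,a8,a9] : Fin 10 → α) 9 = a9 := rfl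
end Aux

/-- With `a1 = (−α₁,1)ᵀ`, `a2 = (α₂,−1)ᵀ`, `b1 = (−β₁,1)ᵀ`, `b2 = (β₂,−1)ᵀ`,
one has `(𝒮 ∘ M)(θ(a1 b1ᵀ, a2 b2ᵀ)) = (α₁α₂, −(α₁+α₂), 1)ᵀ (β₁β₂, −(β₁+β₂), 1)`,
a matrix of rank at most one. -/
theorem SM_theta_rank_one
    (α₁ α₂ β₁ β₂ : ℂ)
    (a1 a2 b1 b2 : Fin 2 → ℂ)
    (ha1 : a1 = ![-α₁, 1]) (ha2 : a2 = ![α₂, -1])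
    (hb1 : b1 = ![-β₁, 1]) (hb2 : b2 = ![β₂, -1]) :
    SM (thetaMap (vecMulVec a1 b1) (vecMulVec a2 b2))
        = vecMulVec ![α₁ * α₂, -(α₁ + α₂), 1] ![β₁ * β₂, -(β₁ + β₂), 1] ∧
      (SM (thetaMap (vecMulVec a1 b1) (vecMulVec a2 b2))).rank ≤ 1 := by
  have h : SM (thetaMap (vecMulVec a1 b1) (vecMulVec a2 b2))
      = vecMulVec ![α₁ * α₂, -(α₁ + α₂), 1] ![β₁ * β₂, -(β₁ + β₂), 1] := by
    subst ha1 ha2 hb1 hb2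
    ext i j
    fin_cases i <;> fin_cases j <;>
      simp [SM, thetaMap, vecMulVec, Matrix.of_apply,
        Matrix.cons_val_succ,
        vec10_five, vec10_six, vec10_seven, vec10_eight, vec10_nine] <;> ring
  refine ⟨h, h ▸ ?_⟩
  rw [Matrix.vecMulVec_eq (Fin 1)]
  exact (Matrix.rank_mul_le_right _ _).trans
    ((Matrix.rank_le_card_height _).trans (by simp))
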